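/- arXiv:2007.06192 — 2 statements merged into one kernel-verified Lean document; each statement's English description precedes it below -/
import Mathlib

section
/- Consider a k-layer width-n ReLU network with IID symmetric continuous parameters. Let P(n,k) be the probability the network is alive (some input has nonzero Jacobian at the output). Then P(n,k) ≤ (1 - 2^{-n²-n})^{k-1}. -/
open MeasureTheory
open scoped ENNReal

/-- Parameters of one width-n ReLU layer: a matrix (as `Fin n → Fin n → ℝ`) and a bias. -/
abbrev LayerParams (n : ℕ) := (Fin n → Fin n → ℝ) × (Fin n → ℝ)

/-- Pre-ReLU response of one layer. -/
def preact {n : ℕ} (p : LayerParams n) (y : Fin n → ℝ) : Fin n → ℝ :=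
  fun i => (∑ j, p.1 i j * y j) + p.2 i

/-- ReLU layer map. -/
def layerMap {n : ℕ} (p : LayerParams n) (y : Fin n → ℝ) : Fin n → ℝ :=
  fun i => max (preact p y i) 0

/-- Output of the first j layers of the network on input x. -/
def netOut {n : ℕ} (θ : ℕ → LayerParams n) (x : Fin n → ℝ) : ℕ → (Fin n → ℝ)
  | 0 => x
  | j + 1 => layerMap (θ j) (netOut θ x j)

/-- x survives layer j+1 iff some coordinate of the pre-activation is positive. -/
def survives {n : ℕ} (θ : ℕ → LayerParams n) (x : Fin n → ℝ) (k : ℕ) : Prop :=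
  ∀ j < k, ∃ i : Fin n, 0 < preact (θ j) (netOut θ x j) i

/-- Extend a finite family of layer parameters to all of ℕ (only indices < k matter). -/
def extParams {n k : ℕ} (θ : Fin k → LayerParams n) : ℕ → LayerParams n :=
  fun j => if h : j < k then θ ⟨j, h⟩ else default

/-- IID parameter measure for a k-layer width-n network, each scalar drawn from ρ. -/
noncomputable def netMeasure (n k : ℕ) (ρ : Measure ℝ) : Measure (Fin k → LayerParams n) :=
  Measure.pi fun _ : Fin k =>
    (Measure.pi fun _ : Fin n => Measure.pi fun _ : Fin n => ρ).prod
      (Measure.pi fun _ : Fin n => ρ)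

/-! A layer whose weights and biases are all negative maps every input of `ℝ₊ⁿ` to a strictly
negative pre-activation, so it kills every input it receives. From the second layer on the
inputs are ReLU outputs, hence lie in `ℝ₊ⁿ`; thus an alive network has no such layer among
layers `2, …, k`. Under a symmetric atomless law each parameter is negative with probability
`1/2`, so a layer is all negative with probability `2^{-(n²+n)}`, independently across layers. -/

theorem measure_Iio_zero_eq_inv_two_of_map_neg_eq {ρ : Measure ℝ} [IsProbabilityMeasure ρ]
    [NullSingletonClass ρ] (hsym : ρ.map (fun t => -t) = ρ) :
    ρ (Set.Iio 0) = 2⁻¹ := by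
  have hIoi : ρ (Set.Ioi 0) = ρ (Set.Iio 0) := by
    conv_lhs => rw [← hsym]
    rw [Measure.map_apply measurable_neg measurableSet_Ioi]
    congr 1
    ext t
    simp
  have hsum : ρ (Set.Iio 0) + ρ (Set.Iio 0) = 1 := by
    nth_rewrite 2 [← hIoi]
    rw [measure_congr Ioi_ae_eq_Ici, ← Set.compl_Iio, measure_add_measure_compl measurableSet_Iio,
      measure_univ]
  exact ENNReal.eq_inv_of_mul_eq_one_left (by rwa [mul_two])

theorem MeasureTheory.Measure.pi_setOf_forall_succ_mem {α : Type*} [MeasurableSpace α]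
    (ν : Measure α) [IsProbabilityMeasure ν] (m : ℕ) (s : Set α) :
    Measure.pi (fun _ : Fin (m + 1) => ν) {θ | ∀ j : Fin m, θ j.succ ∈ s} = ν s ^ m := by
  have hset : {θ : Fin (m + 1) → α | ∀ j : Fin m, θ j.succ ∈ s} =
      Set.univ.pi (Fin.cases Set.univ fun _ => s) := by
    ext θ
    simp [Fin.forall_fin_succ]
  rw [hset, Measure.pi_pi, Fin.prod_univ_succ]
  simp

noncomputable def layerMeasure (n : ℕ) (ρ : Measure ℝ) : Measure (LayerParams n) :=
  (Measure.pi fun _ : Fin n => Measure.pi fun _ : Fin n => ρ).prod (Measure.pi fun _ : Fin n => ρ)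

instance (n : ℕ) (ρ : Measure ℝ) [IsProbabilityMeasure ρ] :
    IsProbabilityMeasure (layerMeasure n ρ) := by
  unfold layerMeasure; infer_instance

theorem netMeasure_eq_pi (n k : ℕ) (ρ : Measure ℝ) :
    netMeasure n k ρ = Measure.pi fun _ : Fin k => layerMeasure n ρ :=
  rfl

def negLayerParams (n : ℕ) : Set (LayerParams n) :=
  {p | (∀ i j, p.1 i j < 0) ∧ ∀ i, p.2 i < 0}

theorem negLayerParams_eq_prod (n : ℕ) : negLayerParams n =
    (Set.univ.pi fun _ : Fin n => Set.univ.pi fun _ : Fin n => Set.Iio (0 : ℝ)) ×ˢ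
      Set.univ.pi fun _ : Fin n => Set.Iio (0 : ℝ) := by
  ext p
  simp [negLayerParams, Set.mem_pi]

theorem measurableSet_negLayerParams (n : ℕ) : MeasurableSet (negLayerParams n) := by
  rw [negLayerParams_eq_prod]
  exact (MeasurableSet.univ_pi fun _ => MeasurableSet.univ_pi fun _ => measurableSet_Iio).prod
    (MeasurableSet.univ_pi fun _ => measurableSet_Iio)

theorem layerMeasure_negLayerParams (n : ℕ) (ρ : Measure ℝ) [SigmaFinite ρ] :
    layerMeasure n ρ (negLayerParams n) = ρ (Set.Iio 0) ^ (n ^ 2 + n) := by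
  rw [negLayerParams_eq_prod, layerMeasure, Measure.prod_prod, Measure.pi_pi, Measure.pi_pi]
  simp [Finset.prod_const, ← pow_mul, ← pow_add, sq]

theorem preact_neg_of_mem_negLayerParams {n : ℕ} {p : LayerParams n}
    (hp : p ∈ negLayerParams n) {y : Fin n → ℝ} (hy : 0 ≤ y) (i : Fin n) :
    preact p y i < 0 :=
  add_neg_of_nonpos_of_neg
    (Finset.sum_nonpos fun j _ => mul_nonpos_of_nonpos_of_nonneg (hp.1 i j).le (hy j)) (hp.2 i)

theorem netOut_succ_nonneg {n : ℕ} (θ : ℕ → LayerParams n) (x : Fin n → ℝ) (j : ℕ) :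
    0 ≤ netOut θ x (j + 1) :=
  fun _ => le_max_right _ _

theorem notMem_negLayerParams_of_survives {n m : ℕ} {θ : Fin (m + 1) → LayerParams n}
    {x : Fin n → ℝ} (hx : survives (extParams θ) x (m + 1)) (j : Fin m) :
    θ j.succ ∉ negLayerParams n := by
  intro hneg
  obtain ⟨i, hi⟩ := hx (j + 1) (by omega)
  have hlayer : extParams θ (j + 1) = θ j.succ := dif_pos (by omega)
  rw [hlayer] at hi
  exact hi.not_gt (preact_neg_of_mem_negLayerParams hneg (netOut_succ_nonneg _ _ _) i)

/-- Upper bound: for a k-layer width-n ReLU network with all parameters IID from a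
symmetric atomless (continuous) distribution, the probability that the network is
alive (some input survives all k layers, i.e. has nonzero Jacobian at the output)
is at most (1 - 2^{-n²-n})^{k-1}. -/
theorem network_alive_upper_bound (n k : ℕ) (ρ : Measure ℝ) [IsProbabilityMeasure ρ]
    (hsym : ρ.map (fun t => -t) = ρ) (hcont : ∀ c : ℝ, ρ {c} = 0) :
    netMeasure n k ρ {θ | ∃ x : Fin n → ℝ, survives (extParams θ) x k} ≤
      (1 - (2 : ℝ≥0∞)⁻¹ ^ (n ^ 2 + n)) ^ (k - 1) := by
  have : NullSingletonClass ρ := ⟨hcont⟩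
  rw [netMeasure_eq_pi]
  rcases k with _ | m
  · simpa using prob_le_one
  have hdead : layerMeasure n ρ (negLayerParams n)ᶜ = 1 - 2⁻¹ ^ (n ^ 2 + n) := by
    rw [prob_compl_eq_one_sub (measurableSet_negLayerParams n), layerMeasure_negLayerParams,
      measure_Iio_zero_eq_inv_two_of_map_neg_eq hsym]
  calc _ ≤ Measure.pi (fun _ : Fin (m + 1) => layerMeasure n ρ)
          {θ | ∀ j : Fin m, θ j.succ ∈ (negLayerParams n)ᶜ} :=
        measure_mono fun _ hθ => notMem_negLayerParams_of_survives hθ.choose_spec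
    _ = _ := by rw [Measure.pi_setOf_forall_succ_mem, hdead, Nat.add_sub_cancel]
end

section
/- Let n(k) = ⌈-log₂(1 - p^{1/k})⌉ for fixed p ∈ (0,1). Then along the path (n(k), k), the lower bound (1 - 2^{-n(k)})^k ≥ p for all k, so the probability of living initialization stays bounded away from 0 as k → ∞ provided the width grows as n(k) ~ log₂ k. -/
/-! Put `q = p^{1/k}`, so that `q^k = p`. Rounding `-log₂(1 - q)` up to the width `n` can only
shrink `2^{-n}` below `1 - q`, so each factor `1 - 2^{-n}` is at least `q`; raising to the `k`-th
power gives `(1 - 2^{-n})^k ≥ q^k = p`. -/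

namespace Real

lemma rpow_neg_natCeil_neg_logb_le {b x : ℝ} (hb : 1 < b) (hx : 0 < x) :
    b ^ (-(⌈-logb b x⌉₊ : ℝ)) ≤ x :=
  calc b ^ (-(⌈-logb b x⌉₊ : ℝ)) ≤ b ^ logb b x :=
        rpow_le_rpow_of_exponent_le hb.le (by linarith [Nat.le_ceil (-logb b x)])
    _ = x := rpow_logb (by linarith) hb.ne' hx

lemma le_one_sub_rpow_neg_natCeil_neg_logb_one_sub {b q : ℝ} (hb : 1 < b) (hq : q < 1) :
    q ≤ 1 - b ^ (-(⌈-logb b (1 - q)⌉₊ : ℝ)) := by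
  linarith [rpow_neg_natCeil_neg_logb_le hb (sub_pos.mpr hq)]

end Real

open Real in
/-- For fixed p ∈ (0,1), along the path n(k) = ⌈-log₂(1 - p^{1/k})⌉ the lower bound
(1 - 2^{-n(k)})^k is at least p for every k ≥ 1; hence any survival probability
P(n,k) dominating the lower bound stays bounded away from 0 (by p) as k → ∞. -/
theorem logarithmic_width_suffices (p : ℝ) (hp : p ∈ Set.Ioo (0 : ℝ) 1)
    (P : ℕ → ℕ → ℝ)
    (hlb : ∀ n k : ℕ, (1 - (2 : ℝ) ^ (-(n : ℝ))) ^ k ≤ P n k) :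
    ∀ k : ℕ, 1 ≤ k →
      p ≤ (1 - (2 : ℝ) ^ (-(⌈-Real.logb 2 (1 - p ^ ((1 : ℝ) / k))⌉₊ : ℝ))) ^ k ∧
      p ≤ P ⌈-Real.logb 2 (1 - p ^ ((1 : ℝ) / k))⌉₊ k := by
  intro k hk
  obtain ⟨hp0, hp1⟩ := hp
  have hq_pow : (p ^ ((1 : ℝ) / k)) ^ k = p := by
    rw [one_div, rpow_inv_natCast_pow hp0.le (by omega)]
  have hq_lt_one : p ^ ((1 : ℝ) / k) < 1 := rpow_lt_one hp0.le hp1 (by positivity)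
  have hbound : p ≤ (1 - (2 : ℝ) ^ (-(⌈-logb 2 (1 - p ^ ((1 : ℝ) / k))⌉₊ : ℝ))) ^ k :=
    calc p = (p ^ ((1 : ℝ) / k)) ^ k := hq_pow.symm
      _ ≤ _ := pow_le_pow_left₀ (by positivity)
        (le_one_sub_rpow_neg_natCeil_neg_logb_one_sub one_lt_two hq_lt_one) k
  exact ⟨hbound, hbound.trans (hlb _ k)⟩
end
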